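/- Let (G, G*, π) be a cover of permutation groups with finite fiber factors. If G is closed then G* is closed. -/

import Mathlib

/-- The topology of pointwise convergence on `Sym(X)`. -/
def pointwiseTop (X : Type*) : TopologicalSpace (Equiv.Perm X) :=
  letI : TopologicalSpace X := ⊥
  TopologicalSpace.induced (fun e => (e : X → X)) inferInstance

/-- The fiber group of a cover at `a`: the restriction to the fiber `π⁻¹(a)` of the
setwise stabilizer of the fiber in `G`. -/
def fiberGroup {X Xs : Type*} (G : Subgroup (Equiv.Perm X)) (π : X → Xs) (a : Xs) :
    Set (Equiv.Perm (π ⁻¹' {a})) :=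
  {e | ∃ g ∈ G, (∀ x : X, π x = a → π (g x) = a) ∧
    ∀ x : (π ⁻¹' {a} : Set X), (e x : X) = g (x : X)}

/-- The pointwise binding group of a cover at `a`: the restriction to the fiber
`π⁻¹(a)` of the pointwise stabilizer in `G` of the complement of the fiber. -/
def pointwiseBindingGroup {X Xs : Type*} (G : Subgroup (Equiv.Perm X)) (π : X → Xs)
    (a : Xs) : Set (Equiv.Perm (π ⁻¹' {a})) :=
  {e | ∃ g ∈ G, (∀ x : X, π x ≠ a → g x = x) ∧
    ∀ x : (π ⁻¹' {a} : Set X), (e x : X) = g (x : X)}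

/-! If `h` is a limit of elements of `G*`, then for every finite set `F` of fibers some
`g_F ∈ G` maps each fiber `π⁻¹(a)`, `a ∈ F`, onto `π⁻¹(h a)`. Relative to the reference map
`r_a = g_{{a}}`, the restriction of `r_a⁻¹ g_F` to `π⁻¹(a)` lies in one of finitely many cosets
of the pointwise binding group, so along an ultrafilter on the finite sets of fibers this coset
stabilizes to some `τ_a G_((A))`. Gluing the maps `r_a τ_a` fiberwise gives a lift `g` of `h`,
and `g` lies in the closure of `G`: on finitely many fibers, `g_F` is corrected to `g` by a
product of binding elements, each supported on one fiber. As `G` is closed, `g ∈ G`, so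
`h ∈ G*`. -/

open Equiv Filter Topology

theorem nhds_basis_pointwiseTop {X : Type*} (h : Perm X) :
    (@nhds _ (pointwiseTop X) h).HasBasis Set.Finite fun I => {g | ∀ x ∈ I, g x = h x} := by
  let _ : TopologicalSpace X := ⊥
  have : DiscreteTopology X := ⟨rfl⟩
  rw [pointwiseTop, nhds_induced, nhds_pi, nhds_discrete]
  exact (hasBasis_pi_pure _).comap _

theorem mem_closure_pointwiseTop_iff {X : Type*} {S : Set (Perm X)} {h : Perm X} :
    h ∈ closure[pointwiseTop X] S ↔ ∀ I : Set X, I.Finite → ∃ g ∈ S, ∀ x ∈ I, g x = h x :=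
  let _ := pointwiseTop X
  mem_closure_iff_nhds_basis (nhds_basis_pointwiseTop h)

theorem isClosed_pointwiseTop_iff {X : Type*} {S : Set (Perm X)} :
    IsClosed[pointwiseTop X] S ↔
      ∀ h : Perm X, (∀ I : Set X, I.Finite → ∃ g ∈ S, ∀ x ∈ I, g x = h x) → h ∈ S := by
  let _ := pointwiseTop X
  simp only [← closure_subset_iff_isClosed, Set.subset_def, mem_closure_pointwiseTop_iff]

section Fibers

variable {X Xs : Type*} {π : X → Xs}

variable (π) in
def MapsFiber (g : Perm X) (a b : Xs) : Prop :=
  ∀ x, π x = a ↔ π (g x) = b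

theorem MapsFiber.mul {g g' : Perm X} {a b c : Xs} (hg' : MapsFiber π g' b c)
    (hg : MapsFiber π g a b) : MapsFiber π (g' * g) a c :=
  fun x => (hg x).trans (hg' (g x))

theorem MapsFiber.inv {g : Perm X} {a b : Xs} (hg : MapsFiber π g a b) :
    MapsFiber π g⁻¹ b a :=
  fun y => by simpa using (hg (g⁻¹ y)).symm

variable (π) in
def FixesOffFiber (a : Xs) (β : Perm X) : Prop :=
  ∀ x, π x ≠ a → β x = x

theorem FixesOffFiber.mapsFiber {a : Xs} {β : Perm X} (hβ : FixesOffFiber π a β) :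
    MapsFiber π β a a := by
  refine fun x => ⟨fun hx => ?_, fun hβx => ?_⟩
  · by_contra hne
    rw [β.injective (hβ _ hne)] at hne
    exact hne hx
  · by_contra hne
    exact hne (hβ x hne ▸ hβx)

theorem exists_perm_apply_eq_of_mapsFiber (h : Perm Xs) (ρ : Xs → Perm X)
    (hρ : ∀ a, MapsFiber π (ρ a) a (h a)) : ∃ g : Perm X, ∀ x, g x = ρ (π x) x := by
  have hπ : ∀ x, π (ρ (π x) x) = h (π x) := fun x => (hρ (π x) x).1 rfl
  refine ⟨Equiv.ofBijective (fun x => ρ (π x) x) ⟨fun x y hxy => ?_, fun y => ?_⟩, fun x => rfl⟩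
  · have hxy' : π x = π y := h.injective (by rw [← hπ, ← hπ]; exact congrArg π hxy)
    simp only [hxy'] at hxy
    exact (ρ (π y)).injective hxy
  · set a := h.symm (π y)
    have hx : π ((ρ a)⁻¹ y) = a := (hρ a _).2 (by simp [a])
    refine ⟨(ρ a)⁻¹ y, ?_⟩
    change ρ (π ((ρ a)⁻¹ y)) ((ρ a)⁻¹ y) = y
    rw [hx]
    exact (ρ a).apply_symm_apply y

theorem exists_mem_of_fixesOffFiber {G : Subgroup (Perm X)} (Q : X → X → Prop) (A : Finset Xs)
    (hA : ∀ a ∈ A, ∃ β ∈ G, FixesOffFiber π a β ∧ ∀ x, π x = a → Q x (β x)) :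
    ∃ γ ∈ G, (∀ x, π x ∉ A → γ x = x) ∧ ∀ x, π x ∈ A → Q x (γ x) := by
  classical
  induction A using Finset.induction_on with
  | empty => exact ⟨1, one_mem G, fun _ _ => rfl, by simp⟩
  | insert a A ha ih =>
    obtain ⟨γ, hγG, hγfix, hγQ⟩ := ih fun b hb => hA b (Finset.mem_insert_of_mem hb)
    obtain ⟨β, hβG, hβfix, hβQ⟩ := hA a (Finset.mem_insert_self a A)
    refine ⟨γ * β, mul_mem hγG hβG, fun x hx => ?_, fun x hx => ?_⟩
    · rw [Finset.mem_insert, not_or] at hx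
      rw [Perm.mul_apply, hβfix x hx.1, hγfix x hx.2]
    rw [Perm.mul_apply]
    rcases Finset.mem_insert.1 hx with hxa | hxA
    · have hβx : π (β x) = a := (hβfix.mapsFiber x).1 hxa
      rw [hγfix _ (hβx ▸ ha)]
      exact hβQ x hxa
    · rw [hβfix x (ne_of_mem_of_not_mem hxA ha)]
      exact hγQ x hxA

variable (π) in
/-- `τ` ranges over extensions by the identity of coset representatives of the pointwise binding
group in the fiber group at `a`. -/
def HasFiniteFiberFactor (G : Subgroup (Perm X)) (a : Xs) : Prop :=
  ∃ T : Set (Perm X), T.Finite ∧ (∀ τ ∈ T, MapsFiber π τ a a) ∧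
    ∀ σ ∈ G, MapsFiber π σ a a →
      ∃ τ ∈ T, ∃ β ∈ G, FixesOffFiber π a β ∧ ∀ x, π x = a → σ (β x) = τ x

theorem hasFiniteFiberFactor_of_finite_cosets {G : Subgroup (Perm X)} {a : Xs}
    {s : Set (Perm (π ⁻¹' {a}))} (hs : s.Finite)
    (hcov : ∀ e ∈ fiberGroup G π a, ∃ f ∈ s, f⁻¹ * e ∈ pointwiseBindingGroup G π a) :
    HasFiniteFiberFactor π G a := by
  classical
  refine ⟨Perm.ofSubtype '' s, hs.image _, ?_, fun σ hσG hσ => ?_⟩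
  · rintro _ ⟨f, -, rfl⟩ x
    exact (Perm.ofSubtype_apply_mem_iff_mem f x).symm
  set e : Perm (π ⁻¹' {a}) := σ.subtypePerm fun x => (hσ x).symm
  obtain ⟨f, hfs, β, hβG, hβfix, hβ⟩ := hcov e ⟨σ, hσG, fun x => (hσ x).1, fun x => rfl⟩
  refine ⟨Perm.ofSubtype f, ⟨f, hfs, rfl⟩, β⁻¹, inv_mem hβG,
    fun x hx => Perm.inv_eq_iff_eq.2 (hβfix x hx).symm, fun x hx => ?_⟩
  have hy : π (β⁻¹ x) = a := ((FixesOffFiber.mapsFiber hβfix).inv x).1 hx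
  have hβy : (f⁻¹ * e) ⟨β⁻¹ x, hy⟩ = ⟨x, hx⟩ :=
    Subtype.ext ((hβ _).trans (β.apply_symm_apply x))
  rw [Perm.mul_apply, Perm.inv_eq_iff_eq] at hβy
  rw [Perm.ofSubtype_apply_of_mem f hx]
  exact congrArg Subtype.val hβy

theorem exists_lift_mem_of_isClosed {G : Subgroup (Perm X)}
    (hG : IsClosed[pointwiseTop X] (G : Set (Perm X))) (hfin : ∀ a, HasFiniteFiberFactor π G a)
    (h : Perm Xs) (happrox : ∀ F : Finset Xs, ∃ g ∈ G, ∀ a ∈ F, MapsFiber π g a (h a)) :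
    ∃ g ∈ G, ∀ x, π (g x) = h (π x) := by
  classical
  choose g hgG hg using happrox
  choose T hTfin hT hcov using hfin
  have hr : ∀ a, MapsFiber π (g {a}) a (h a) := fun a => hg {a} a (Finset.mem_singleton_self a)
  obtain ⟨U, hU⟩ := Ultrafilter.exists_le (atTop : Filter (Finset Xs))
  have hτ : ∀ a, ∃ τ ∈ T a, ∀ᶠ F in U, ∃ β ∈ G, FixesOffFiber π a β ∧
      ∀ x, π x = a → g F (β x) = g {a} (τ x) := by
    intro a
    refine (U.eventually_exists_mem_iff (hTfin a)).1 ?_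
    filter_upwards [hU (eventually_ge_atTop {a})] with F hF
    obtain ⟨τ, hτT, β, hβG, hβfix, hβ⟩ := hcov a _ (mul_mem (inv_mem (hgG {a})) (hgG F))
      ((hr a).inv.mul (hg F a (hF (Finset.mem_singleton_self a))))
    exact ⟨τ, hτT, β, hβG, hβfix, fun x hx => Perm.inv_eq_iff_eq.1 (hβ x hx)⟩
  choose τ hτT hτ using hτ
  have hρ : ∀ a, MapsFiber π (g {a} * τ a) a (h a) := fun a => (hr a).mul (hT a _ (hτT a))
  obtain ⟨g', hg'⟩ := exists_perm_apply_eq_of_mapsFiber h _ hρ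
  refine ⟨g', isClosed_pointwiseTop_iff.1 hG g' fun I hI => ?_, fun x => ?_⟩
  · obtain ⟨F, hF⟩ := ((eventually_all_finset (hI.toFinset.image π)).2 fun a _ => hτ a).exists
    obtain ⟨γ, hγG, -, hγ⟩ := exists_mem_of_fixesOffFiber (fun x y => g F y = g' x) _
      fun a ha => by
        obtain ⟨β, hβG, hβfix, hβ⟩ := hF a ha
        exact ⟨β, hβG, hβfix, fun x hx => by rw [hβ x hx, hg', hx]; rfl⟩
    exact ⟨g F * γ, mul_mem (hgG F) hγG,
      fun x hx => hγ x (Finset.mem_image_of_mem π (hI.mem_toFinset.2 hx))⟩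
  · rw [hg']
    exact (hρ (π x) x).1 rfl

end Fibers

theorem stmt_17_general {X Xs : Type*} (G : Subgroup (Equiv.Perm X)) (Gs : Subgroup (Equiv.Perm Xs))
    (π : X → Xs)
    (himg : ∀ h : Equiv.Perm Xs, h ∈ Gs ↔ ∃ g ∈ G, ∀ a : X, h (π a) = π (g a))
    (hfff : ∀ a : Xs, ∃ s : Set (Equiv.Perm (π ⁻¹' {a})), s.Finite ∧
      ∀ e ∈ fiberGroup G π a, ∃ f ∈ s, f⁻¹ * e ∈ pointwiseBindingGroup G π a)
    (hGclosed : @IsClosed _ (pointwiseTop X) (G : Set (Equiv.Perm X))) :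
    @IsClosed _ (pointwiseTop Xs) (Gs : Set (Equiv.Perm Xs)) := by
  refine isClosed_pointwiseTop_iff.2 fun h hh => ?_
  have hfin : ∀ a, HasFiniteFiberFactor π G a := fun a => by
    obtain ⟨s, hs, hcov⟩ := hfff a
    exact hasFiniteFiberFactor_of_finite_cosets hs hcov
  obtain ⟨g, hgG, hg⟩ := exists_lift_mem_of_isClosed hGclosed hfin h fun F => by
    obtain ⟨k, hkGs, hk⟩ := hh F F.finite_toSet
    obtain ⟨g, hgG, hgk⟩ := (himg k).1 hkGs
    exact ⟨g, hgG, fun a ha x => by rw [← hk a ha, ← hgk, k.injective.eq_iff]⟩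
  exact (himg h).2 ⟨g, hgG, fun x => (hg x).symm⟩

/-- let `(G, G*, π)` be a cover of permutation groups with finite fiber
factors (each fiber group is covered by finitely many cosets of the corresponding
pointwise binding group). If `G` is closed then `G*` is closed. -/
theorem stmt_17 {X Xs : Type*} (G : Subgroup (Equiv.Perm X)) (Gs : Subgroup (Equiv.Perm Xs))
    (π : X → Xs) (hsurj : Function.Surjective π)
    (hcong : ∀ g ∈ G, ∀ a b : X, π a = π b → π (g a) = π (g b))
    (himg : ∀ h : Equiv.Perm Xs, h ∈ Gs ↔ ∃ g ∈ G, ∀ a : X, h (π a) = π (g a))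
    (hfff : ∀ a : Xs, ∃ s : Set (Equiv.Perm (π ⁻¹' {a})), s.Finite ∧
      ∀ e ∈ fiberGroup G π a, ∃ f ∈ s, f⁻¹ * e ∈ pointwiseBindingGroup G π a)
    (hGclosed : @IsClosed _ (pointwiseTop X) (G : Set (Equiv.Perm X))) :
    @IsClosed _ (pointwiseTop Xs) (Gs : Set (Equiv.Perm Xs)) :=
  stmt_17_general G Gs π himg hfff hGclosed
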